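/- Let $(V_n)$ be Banach spaces with contractive connecting maps $\Phi_{n,n+1}: V_{n+1}\to V_n$, and suppose each $V_n = W_n^*$ is a dual Banach space with the adjoint relation: there are contractions $\Theta_{n+1,n}: W_n \to W_{n+1}$ with $\Phi_{n,n+1} = \Theta_{n+1,n}^*$. Let $W_\infty$ denote the algebraic inductive limit vector space of the $W_n$ along the $\Theta_{n+1,n}$, with canonical maps $\Theta_{\infty,n}:W_n\to W_\infty$, and equip it with the seminorm $\|\Theta_{\infty,n}(f)\| := \lim_{m\to\infty}\|\Theta_{m,n}(f)\|$ (the limit exists since the sequence is nonincreasing). Then for every bounded coherent sequence $\omega = (\omega_n) \in \mathcal{L}$ (projective limit as above), the formula $\iota(\omega)(\Theta_{\infty,n}(f)) := \omega_n(f)$ gives a well-defined linear functional on $W_\infty$ bounded with respect to the seminorm, and the resulting map $\iota : \mathcal{L} \to (W_\infty)^*$ is a linear isometry: $\|\iota(\omega)\| = \sup_n \|\omega_n\|$. -/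

import Mathlib

/-!
Coherence `ωₙ = ωₙ₊₁ ∘ Θₙ` propagates along the iterated maps, `ωₙ = ωₘ ∘ Θ_{m,n}`, so `ι(ω)` is
well defined and `‖ωₙ f‖ ≤ ‖ωₘ‖ ‖Θ_{m,n} f‖ ≤ (supₘ ‖ωₘ‖) ‖Θ_{m,n} f‖` for every `m ≥ n`; passing to
the infimum over `m` gives the bound. Conversely the limit seminorm of `Θ_{∞,n} f` is at most `‖f‖`
(take `m = n`), so any admissible constant bounds every `‖ωₙ‖`.
-/

/-- Iterated connecting map `Θ_{m,n} = Θ_{m,m-1} ∘ ⋯ ∘ Θ_{n+1,n}` (and `0` if `m < n`). -/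
noncomputable def chainMap {W : ℕ → Type*} [∀ n, Zero (W n)]
    (Θ : ∀ n, W n → W (n + 1)) (n m : ℕ) (f : W n) : W m :=
  if h : n ≤ m then Nat.leRecOn h (fun {k} x => Θ k x) f else 0

section Coherence

variable {W : ℕ → Type*} [∀ n, Zero (W n)] (Θ : ∀ n, W n → W (n + 1))

lemma chainMap_self (n : ℕ) (f : W n) : chainMap Θ n n f = f := by
  simp [chainMap, Nat.leRecOn_self]

lemma chainMap_succ {n m : ℕ} (h : n ≤ m) (f : W n) :
    chainMap Θ n (m + 1) f = Θ m (chainMap Θ n m f) := by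
  simp only [chainMap, dif_pos h, dif_pos (h.trans (Nat.le_succ m))]
  exact Nat.leRecOn_succ h f

variable {α : Type*} {φ : ∀ n, W n → α}

lemma apply_chainMap_of_coherent (hφ : ∀ n f, φ n f = φ (n + 1) (Θ n f))
    {n m : ℕ} (h : n ≤ m) (f : W n) : φ m (chainMap Θ n m f) = φ n f := by
  induction m, h using Nat.le_induction with
  | base => rw [chainMap_self]
  | succ m hm ih => rw [chainMap_succ Θ hm, ← hφ, ih]

lemma eq_of_chainMap_eq_of_coherent (hφ : ∀ n f, φ n f = φ (n + 1) (Θ n f))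
    {n n' m : ℕ} (h : n ≤ m) (h' : n' ≤ m) {f : W n} {f' : W n'}
    (heq : chainMap Θ n m f = chainMap Θ n' m f') : φ n f = φ n' f' := by
  rw [← apply_chainMap_of_coherent Θ hφ h, ← apply_chainMap_of_coherent Θ hφ h', heq]

end Coherence

section Seminorm

variable {𝕜 F : Type*} [NontriviallyNormedField 𝕜] [SeminormedAddCommGroup F] [NormedSpace 𝕜 F]
  {W : ℕ → Type*} [∀ n, SeminormedAddCommGroup (W n)] [∀ n, NormedSpace 𝕜 (W n)]
  (Θ : ∀ n, W n → W (n + 1))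

lemma iInf_norm_chainMap_le_norm (n : ℕ) (f : W n) :
    ⨅ k : ℕ, ‖chainMap Θ n (n + k) f‖ ≤ ‖f‖ := by
  simpa [chainMap_self] using
    ciInf_le (f := fun k : ℕ => ‖chainMap Θ n (n + k) f‖) ⟨0, by rintro _ ⟨_, rfl⟩; positivity⟩ 0

variable {ω : ∀ n, W n →L[𝕜] F}

lemma norm_apply_le_iSup_opNorm_mul_iInf_norm_chainMap
    (hcoh : ∀ n f, ω n f = ω (n + 1) (Θ n f)) (hbdd : BddAbove (Set.range fun m => ‖ω m‖))
    (n : ℕ) (f : W n) :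
    ‖ω n f‖ ≤ (⨆ m, ‖ω m‖) * ⨅ k : ℕ, ‖chainMap Θ n (n + k) f‖ := by
  have hS : ∀ m, ‖ω m‖ ≤ ⨆ m, ‖ω m‖ := le_ciSup hbdd
  rw [Real.mul_iInf_of_nonneg ((norm_nonneg _).trans (hS n))]
  refine le_ciInf fun k => ?_
  calc ‖ω n f‖ = ‖ω (n + k) (chainMap Θ n (n + k) f)‖ := by
        rw [apply_chainMap_of_coherent Θ (φ := fun n f => ω n f) hcoh (Nat.le_add_right n k)]
    _ ≤ ‖ω (n + k)‖ * ‖chainMap Θ n (n + k) f‖ := (ω (n + k)).le_opNorm _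
    _ ≤ (⨆ m, ‖ω m‖) * ‖chainMap Θ n (n + k) f‖ := by gcongr; exact hS _

lemma opNorm_le_of_norm_apply_le_mul_iInf_norm_chainMap {C : ℝ} (hC : 0 ≤ C)
    (hbound : ∀ n (f : W n), ‖ω n f‖ ≤ C * ⨅ k : ℕ, ‖chainMap Θ n (n + k) f‖) (n : ℕ) :
    ‖ω n‖ ≤ C :=
  (ω n).opNorm_le_bound hC fun f =>
    (hbound n f).trans (mul_le_mul_of_nonneg_left (iInf_norm_chainMap_le_norm Θ n f) hC)

end Seminorm

theorem dual_projective_limit_isometric_embedding_general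
    (W : ℕ → Type*) [∀ n, NormedAddCommGroup (W n)] [∀ n, NormedSpace ℂ (W n)]
    (Θ : ∀ n, W n →L[ℂ] W (n + 1))
    (ω : ∀ n, W n →L[ℂ] ℂ)
    (hcoh : ∀ (n : ℕ) (f : W n), ω n f = ω (n + 1) (Θ n f))
    (C₀ : ℝ) (hbdd : ∀ n, ‖ω n‖ ≤ C₀) :
    -- coherence along iterated connecting maps
    (∀ (n m : ℕ), n ≤ m → ∀ f : W n,
      ω m (chainMap (fun k => (Θ k : W k → W (k + 1))) n m f) = ω n f) ∧
    -- well-definedness of ι(ω) on the inductive limit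
    (∀ (n n' m : ℕ), n ≤ m → n' ≤ m → ∀ (f : W n) (f' : W n'),
      chainMap (fun k => (Θ k : W k → W (k + 1))) n m f
          = chainMap (fun k => (Θ k : W k → W (k + 1))) n' m f' →
      ω n f = ω n' f') ∧
    -- boundedness for the limit seminorm, with constant supₙ ‖ωₙ‖
    (∀ (n : ℕ) (f : W n),
      ‖ω n f‖ ≤ (⨆ m, ‖ω m‖) *
        ⨅ k : ℕ, ‖chainMap (fun j => (Θ j : W j → W (j + 1))) n (n + k) f‖) ∧
    -- isometry: supₙ ‖ωₙ‖ is the best such constant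
    (∀ C : ℝ, 0 ≤ C →
      (∀ (n : ℕ) (f : W n),
        ‖ω n f‖ ≤ C *
          ⨅ k : ℕ, ‖chainMap (fun j => (Θ j : W j → W (j + 1))) n (n + k) f‖) →
      ∀ m, ‖ω m‖ ≤ C) := by
  have hcoh' : ∀ n (f : W n), (fun n (f : W n) => ω n f) n f = ω (n + 1) (Θ n f) := hcoh
  have hbdd' : BddAbove (Set.range fun m => ‖ω m‖) := ⟨C₀, by rintro _ ⟨m, rfl⟩; exact hbdd m⟩
  refine ⟨fun n m h f => apply_chainMap_of_coherent _ hcoh' h f,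
    fun n n' m h h' f f' heq => eq_of_chainMap_eq_of_coherent _ hcoh' h h' heq,
    norm_apply_le_iSup_opNorm_mul_iInf_norm_chainMap _ hcoh hbdd',
    fun C hC hbound => opNorm_le_of_norm_apply_le_mul_iInf_norm_chainMap _ hC hbound⟩

/-- for a projective sequence of duals of an inductive sequence of normed
spaces along contractions `Θₙ`, every bounded coherent sequence of functionals
`ω = (ωₙ)` induces a well-defined functional `ι(ω)` on the inductive limit, bounded for
the limit seminorm `‖Θ_{∞,n}(f)‖ = lim_m ‖Θ_{m,n}(f)‖ = inf_k ‖Θ_{n+k,n}(f)‖`, and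
`ι` is isometric: `‖ι(ω)‖ = supₙ ‖ωₙ‖`. -/
theorem dual_projective_limit_isometric_embedding
    (W : ℕ → Type*) [∀ n, NormedAddCommGroup (W n)] [∀ n, NormedSpace ℂ (W n)]
    (Θ : ∀ n, W n →L[ℂ] W (n + 1)) (hΘ : ∀ n, ‖Θ n‖ ≤ 1)
    (ω : ∀ n, W n →L[ℂ] ℂ)
    (hcoh : ∀ (n : ℕ) (f : W n), ω n f = ω (n + 1) (Θ n f))
    (C₀ : ℝ) (hbdd : ∀ n, ‖ω n‖ ≤ C₀) :
    -- coherence along iterated connecting maps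
    (∀ (n m : ℕ), n ≤ m → ∀ f : W n,
      ω m (chainMap (fun k => (Θ k : W k → W (k + 1))) n m f) = ω n f) ∧
    -- well-definedness of ι(ω) on the inductive limit
    (∀ (n n' m : ℕ), n ≤ m → n' ≤ m → ∀ (f : W n) (f' : W n'),
      chainMap (fun k => (Θ k : W k → W (k + 1))) n m f
          = chainMap (fun k => (Θ k : W k → W (k + 1))) n' m f' →
      ω n f = ω n' f') ∧
    -- boundedness for the limit seminorm, with constant supₙ ‖ωₙ‖
    (∀ (n : ℕ) (f : W n),
      ‖ω n f‖ ≤ (⨆ m, ‖ω m‖) *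
        ⨅ k : ℕ, ‖chainMap (fun j => (Θ j : W j → W (j + 1))) n (n + k) f‖) ∧
    -- isometry: supₙ ‖ωₙ‖ is the best such constant
    (∀ C : ℝ, 0 ≤ C →
      (∀ (n : ℕ) (f : W n),
        ‖ω n f‖ ≤ C *
          ⨅ k : ℕ, ‖chainMap (fun j => (Θ j : W j → W (j + 1))) n (n + k) f‖) →
      ∀ m, ‖ω m‖ ≤ C) :=
  dual_projective_limit_isometric_embedding_general W Θ ω hcoh C₀ hbdd
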